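/- arXiv:1109.4879 — 6 statements merged into one kernel-verified Lean document; each statement's English description precedes it below -/
import Mathlib

section
/- For any nonnegative integers n and k, ν(Σ_{i ≥ 0} C(n, 2i+1)·i^k) ≥ n − k − α(n); equivalently, 2^{max(0, n−k−α(n))} divides Σ_{i ≥ 0} C(n, 2i+1)·i^k. -/
/-- `alpha n` is the number of 1's in the binary expansion of `n`. -/
def alpha (n : ℕ) : ℕ := (Nat.digits 2 n).sum

/-- `Σ_{i ≥ 0} C(n, 2i+1)·i^k` (a finite sum of natural numbers). -/
def oddSum (n k : ℕ) : ℕ := ∑ i ∈ Finset.range (n + 1), Nat.choose n (2 * i + 1) * i ^ k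

/-!
Since `2^k i^k = p(2i+1)` for `p = (X - 1)^k`, it suffices to show that
`2^(n - α(n))` divides `Σ_i C(n,2i+1) p(2i+1)` for every integer polynomial `p` of degree `< n`.
Such a `p` is an integer combination of the falling factorials `x^(j)`, `j < n`, and
evaluating `Σ_m C(n,m) m^(j) t^m = n^(j) t^j (1 + t)^(n-j)` at `t = ±1` gives
`Σ_i C(n,2i+1) (2i+1)^(j) = n^(j) 2^(n-j-1)`. By Legendre's formula
`ν(n^(j)) = ν(n!) - ν((n-j)!) > (n - α(n)) - (n - j)`, so every such term is divisible by
`2^(n - α(n))`.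
-/

open Finset Polynomial
open scoped Nat

theorem sum_range_two_mul {M : Type*} [AddCommMonoid M] (f : ℕ → M) (L : ℕ) :
    ∑ m ∈ range (2 * L), f m = ∑ t ∈ range L, (f (2 * t) + f (2 * t + 1)) := by
  induction L with
  | zero => simp
  | succ L ih => rw [Nat.mul_succ, sum_range_succ, sum_range_succ, ih, sum_range_succ, add_assoc]

theorem two_mul_sum_choose_odd {R : Type*} [CommRing R] (n : ℕ) (g : ℕ → R) :
    2 * ∑ i ∈ range (n + 1), (n.choose (2 * i + 1) : R) * g (2 * i + 1) =
      ∑ m ∈ range (n + 1), (n.choose m : R) * g m -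
        ∑ m ∈ range (n + 1), (n.choose m : R) * g m * (-1) ^ m := by
  set h : ℕ → R := fun m => (n.choose m : R) * g m * (1 - (-1) ^ m)
  have hext : ∑ m ∈ range (n + 1), h m = ∑ m ∈ range (2 * (n + 1)), h m :=
    sum_subset (range_subset_range.2 (by omega)) fun m _ hm => by
      simp [h, Nat.choose_eq_zero_of_lt (show n < m by simpa using hm)]
  calc 2 * ∑ i ∈ range (n + 1), (n.choose (2 * i + 1) : R) * g (2 * i + 1)
      = ∑ t ∈ range (n + 1), (h (2 * t) + h (2 * t + 1)) := by
        rw [mul_sum]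
        refine sum_congr rfl fun t _ => ?_
        simp only [h, pow_succ, pow_mul]
        ring
    _ = _ := by
        rw [← sum_range_two_mul, ← hext, ← sum_sub_distrib]
        exact sum_congr rfl fun m _ => by ring

theorem choose_add_mul_descFactorial (n j l : ℕ) :
    n.choose (j + l) * (j + l).descFactorial j = n.descFactorial j * (n - j).choose l := by
  rw [Nat.descFactorial_eq_factorial_mul_choose, Nat.descFactorial_eq_factorial_mul_choose,
    mul_left_comm, Nat.choose_mul (Nat.le_add_right j l), Nat.add_sub_cancel_left]
  ring

theorem sum_choose_mul_descFactorial_mul_pow {R : Type*} [CommSemiring R] {n j : ℕ} (hj : j ≤ n)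
    (t : R) :
    ∑ m ∈ range (n + 1), (n.choose m : R) * m.descFactorial j * t ^ m =
      n.descFactorial j * t ^ j * (t + 1) ^ (n - j) := by
  rw [show n + 1 = j + (n - j + 1) by omega, sum_range_add, add_pow, mul_sum,
    sum_eq_zero fun m hm => by simp [Nat.descFactorial_eq_zero_iff_lt.2 (mem_range.1 hm)],
    zero_add]
  refine sum_congr rfl fun l _ => ?_
  rw [← Nat.cast_mul, choose_add_mul_descFactorial]
  push_cast
  ring

theorem sum_choose_odd_mul_descFactorial {n j : ℕ} (hj : j < n) :
    ∑ i ∈ range (n + 1), (n.choose (2 * i + 1) : ℤ) * (2 * i + 1).descFactorial j =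
      n.descFactorial j * 2 ^ (n - j - 1) := by
  refine mul_left_cancel₀ (two_ne_zero (α := ℤ)) ?_
  have hfull := sum_choose_mul_descFactorial_mul_pow hj.le (1 : ℤ)
  simp only [one_pow, mul_one] at hfull
  obtain ⟨e, he⟩ : ∃ e, n - j = e + 1 := ⟨n - j - 1, by omega⟩
  rw [two_mul_sum_choose_odd n fun m => (m.descFactorial j : ℤ), hfull,
    sum_choose_mul_descFactorial_mul_pow hj.le, he, neg_add_cancel, zero_pow e.succ_ne_zero,
    Nat.add_sub_cancel]
  ring

theorem padicValNat_two_factorial_add_alpha (n : ℕ) : padicValNat 2 n ! + alpha n = n := by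
  have := sub_one_mul_padicValNat_factorial (p := 2) (hp := ⟨Nat.prime_two⟩) n
  have := Nat.digit_sum_le 2 n
  simp only [alpha]
  omega

theorem two_pow_dvd_descFactorial_mul_two_pow {n j : ℕ} (hj : j < n) :
    2 ^ (n - alpha n) ∣ n.descFactorial j * 2 ^ (n - j - 1) := by
  have : Fact (Nat.Prime 2) := ⟨Nat.prime_two⟩
  have hsplit :
      padicValNat 2 (n - j)! + padicValNat 2 (n.descFactorial j) = padicValNat 2 n ! := by
    rw [← padicValNat.mul (Nat.factorial_ne_zero _)
      (Nat.descFactorial_eq_zero_iff_lt.not.2 (by omega)), Nat.factorial_mul_descFactorial hj.le]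
  have hlegendre := padicValNat_two_factorial_add_alpha n
  have hlt := padicValNat_factorial_lt_of_ne_zero 2 (n := n - j) (by omega)
  calc 2 ^ (n - alpha n) ∣ 2 ^ (padicValNat 2 (n.descFactorial j) + (n - j - 1)) :=
        pow_dvd_pow 2 (by omega)
    _ ∣ n.descFactorial j * 2 ^ (n - j - 1) := by
        rw [pow_add]
        exact mul_dvd_mul pow_padicValNat_dvd dvd_rfl

theorem mem_span_descPochhammer {n : ℕ} {p : ℤ[X]} (hp : p.degree < n) :
    p ∈ Submodule.span ℤ (descPochhammer ℤ '' Set.Iio n) := by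
  let S : Polynomial.Sequence ℤ := ⟨descPochhammer ℤ, fun i => by
    rw [degree_eq_natDegree (monic_descPochhammer ℤ i).ne_zero, descPochhammer_natDegree]⟩
  rw [show descPochhammer ℤ = S from rfl,
    S.span_degreeLT fun i _ => by simp [S, (monic_descPochhammer ℤ i).leadingCoeff]]
  exact mem_degreeLT.2 hp

theorem two_pow_dvd_sum_choose_odd_mul_eval {n : ℕ} {p : ℤ[X]} (hp : p.degree < n) :
    (2 : ℤ) ^ (n - alpha n) ∣
      ∑ i ∈ range (n + 1), (n.choose (2 * i + 1) : ℤ) * p.eval ((2 * i + 1 : ℕ) : ℤ) := by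
  have hmem := mem_span_descPochhammer hp
  clear hp
  induction hmem using Submodule.span_induction with
  | mem q hq =>
    obtain ⟨j, hj, rfl⟩ := hq
    simp only [descPochhammer_eval_eq_descFactorial]
    rw [sum_choose_odd_mul_descFactorial hj]
    exact_mod_cast two_pow_dvd_descFactorial_mul_two_pow hj
  | zero => simp
  | add q r _ _ hq hr => simpa only [eval_add, mul_add, sum_add_distrib] using dvd_add hq hr
  | smul a q _ hq =>
    simp only [eval_smul, smul_eq_mul, mul_left_comm _ a, ← mul_sum]
    exact hq.mul_left a

/-- `ν(Σ_{i} C(n,2i+1) i^k) ≥ n − k − α(n)`, stated in the equivalent divisibility form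
`2^{max(0, n−k−α(n))} ∣ Σ_{i} C(n,2i+1) i^k` (which also covers the case of a zero sum,
where `ν = ∞`). -/
theorem stmt4 (n k : ℕ) :
    2 ^ (((n : ℤ) - (k : ℤ) - (alpha n : ℤ)).toNat) ∣ oddSum n k := by
  rw [show ((n : ℤ) - k - alpha n).toNat = n - k - alpha n by omega]
  rcases Nat.eq_zero_or_pos (n - k - alpha n) with h0 | hpos
  · simp [h0]
  have hdeg : ((X - C 1) ^ k : ℤ[X]).degree < n := by
    rw [degree_pow, degree_X_sub_C, nsmul_one]
    exact_mod_cast (by omega : k < n)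
  have hdvd := two_pow_dvd_sum_choose_odd_mul_eval hdeg
  have heval : ∑ i ∈ range (n + 1),
      (n.choose (2 * i + 1) : ℤ) * ((X - C 1) ^ k : ℤ[X]).eval ((2 * i + 1 : ℕ) : ℤ) =
        2 ^ k * (oddSum n k : ℤ) := by
    simp only [oddSum, eval_pow, eval_sub, eval_X, eval_C, Nat.cast_sum, Nat.cast_mul,
      Nat.cast_pow, mul_sum]
    refine sum_congr rfl fun i _ => ?_
    push_cast
    ring
  rw [heval, show n - alpha n = k + (n - k - alpha n) by omega, pow_add] at hdvd
  exact_mod_cast (mul_dvd_mul_iff_left (by positivity)).mp hdvd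
end

section
/- Let n and k be nonnegative integers with n > k. Then, as rational numbers, Σ_{i ≥ 0} C(n, 2i+1)·i^k divided by 2^{n−1−2k}·k! (where the exponent n−1−2k is an integer, possibly negative) is congruent modulo 4 in ℤ_(2) to C(n−1−k, k) + 2·C(n−1−k, k−2) if n−1 and k are both even, and to C(n−1−k, k) otherwise; here C(a, b) = 0 when b < 0. -/
/-- Congruence mod 4 in `ℤ_(2)`:  `ν(r − s) ≥ 2`, with `ν(0) = ∞` (i.e. `r = s` allowed). -/
def cong4 (r s : ℚ) : Prop := r = s ∨ 2 ≤ padicValRat 2 (r - s)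

/-!
Write `F = (eˣ - 1) / x`. Since `eⁱˣ = (1 + x F)^i`, binomial expansion gives
`oddSum n k / k! = Σ_j c(n, j) [x^(k-j)] F^j` with `c(n, j) = Σ_i C(n, 2i+1) C(i, j)`, and these
numbers satisfy `c(n+2, j+1) = 2 c(n+1, j+1) + c(n, j)`, whence `c(n, j) = 2^(n-1-2j) C(n-1-j, j)`.
After division by `2^(n-1-2k) k!` the `j`-th term is `4^(k-j) [x^(k-j)] F^j · C(n-1-j, j)`.
As `ν₂(1/(m+1)!) ≥ -m`, the ultrametric inequality gives `ν₂([x^m] F^j) ≥ -m` for every power of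
`F`, so only `j = k` and `j = k-1` survive mod 4. The first is `C(n-1-k, k)`, the second
`2(k-1) C(n-k, k-1)`, whose residue mod 4 comes from `(k-1) C(n-k, k-1) = (n-k) C(n-k-1, k-2)`.
-/

open Finset PowerSeries Nat

def oddChooseSum (n j : ℕ) : ℕ := ∑ i ∈ range (n + 1), n.choose (2 * i + 1) * i.choose j

lemma oddChooseSum_eq_sum_range {n N : ℕ} (h : n ≤ N) (j : ℕ) :
    oddChooseSum n j = ∑ i ∈ range (N + 1), n.choose (2 * i + 1) * i.choose j := by
  refine sum_subset (range_subset_range.2 (by omega)) fun i _ hi => ?_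
  rw [Nat.choose_eq_zero_of_lt (by simp at hi; omega), zero_mul]

lemma Nat.choose_add_two_add_choose (n m : ℕ) :
    (n + 2).choose (m + 2) + n.choose (m + 2) = 2 * (n + 1).choose (m + 2) + n.choose m := by
  simp only [Nat.choose_succ_succ]
  ring

lemma oddChooseSum_add_two_add (n j : ℕ) :
    oddChooseSum (n + 2) j + oddChooseSum n j =
      2 * oddChooseSum (n + 1) j +
        ∑ i ∈ range (n + 2), n.choose (2 * i + 1) * (i + 1).choose j := by
  rw [oddChooseSum_eq_sum_range le_rfl, oddChooseSum_eq_sum_range (N := n + 2) (by omega),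
    oddChooseSum_eq_sum_range (N := n + 2) (by omega), sum_range_succ' _ (n + 2),
    sum_range_succ' _ (n + 2), sum_range_succ' _ (n + 2), mul_add, mul_sum, add_add_add_comm,
    ← sum_add_distrib, add_right_comm, ← sum_add_distrib]
  congr 1
  · refine sum_congr rfl fun i _ => ?_
    rw [show 2 * (i + 1) + 1 = 2 * i + 1 + 2 by ring, ← add_mul, Nat.choose_add_two_add_choose]
    ring
  · simp only [Nat.mul_zero, zero_add, Nat.choose_one_right]
    ring

lemma oddChooseSum_add_two_zero (n : ℕ) :
    oddChooseSum (n + 2) 0 = 2 * oddChooseSum (n + 1) 0 := by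
  have h := oddChooseSum_add_two_add n 0
  simp only [Nat.choose_zero_right, mul_one] at h
  have hn : ∑ i ∈ range (n + 2), n.choose (2 * i + 1) = oddChooseSum n 0 := by
    simp [oddChooseSum_eq_sum_range (show n ≤ n + 1 by omega)]
  omega

lemma oddChooseSum_add_two_succ (n j : ℕ) :
    oddChooseSum (n + 2) (j + 1) = 2 * oddChooseSum (n + 1) (j + 1) + oddChooseSum n j := by
  have h := oddChooseSum_add_two_add n (j + 1)
  simp only [Nat.choose_succ_succ', mul_add, sum_add_distrib] at h
  rw [← oddChooseSum_eq_sum_range (by omega), ← oddChooseSum_eq_sum_range (by omega)] at h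
  omega

lemma Nat.choose_succ_sub_succ (n j : ℕ) :
    (n + 1 - j).choose (j + 1) = (n - j).choose (j + 1) + (n - j).choose j := by
  rcases le_or_gt j n with hj | hj
  · rw [Nat.sub_add_comm hj, Nat.choose_succ_succ', add_comm]
  · rw [Nat.sub_eq_zero_of_le hj, Nat.sub_eq_zero_of_le (by omega),
      Nat.choose_eq_zero_of_lt (by omega), Nat.choose_eq_zero_of_lt (by omega)]

lemma four_pow_mul_oddChooseSum (n j : ℕ) :
    4 ^ j * oddChooseSum (n + 1) j = 2 ^ n * (n - j).choose j := by
  induction n using Nat.twoStepInduction generalizing j with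
  | zero => cases j <;> simp [oddChooseSum, sum_range_succ, Nat.choose_eq_zero_iff]
  | one => rcases j with _ | _ | j <;> simp [oddChooseSum, sum_range_succ, Nat.choose_eq_zero_iff]
  | more n ih₀ ih₁ =>
    cases j with
    | zero => simpa [oddChooseSum_add_two_zero, pow_succ, mul_comm] using ih₁ 0
    | succ j =>
      calc 4 ^ (j + 1) * oddChooseSum (n + 1 + 2) (j + 1)
          = 2 * (4 ^ (j + 1) * oddChooseSum (n + 2) (j + 1)) +
              4 * (4 ^ j * oddChooseSum (n + 1) j) := by
            rw [oddChooseSum_add_two_succ]; ring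
        _ = 2 * (2 ^ (n + 1) * (n - j).choose (j + 1)) + 4 * (2 ^ n * (n - j).choose j) := by
            rw [ih₁, ih₀, show n + 1 - (j + 1) = n - j by omega]
        _ = 2 ^ (n + 2) * (n + 2 - (j + 1)).choose (j + 1) := by
            rw [show n + 2 - (j + 1) = n + 1 - j by omega, Nat.choose_succ_sub_succ]; ring

lemma sum_choose_odd_smul_one_add_pow {R : Type*} [CommSemiring R] (n : ℕ) (y : R) :
    ∑ i ∈ range (n + 1), n.choose (2 * i + 1) • (1 + y) ^ i =
      ∑ j ∈ range (n + 1), oddChooseSum n j • y ^ j := by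
  have hexp : ∀ i ∈ range (n + 1), (1 + y) ^ i = ∑ j ∈ range (n + 1), i.choose j • y ^ j := by
    intro i hi
    rw [add_comm, add_pow]
    refine (sum_subset (range_subset_range.2 (by simp at hi; omega)) fun j _ hj => ?_).trans
      (sum_congr rfl fun j _ => by rw [one_pow, mul_one, nsmul_eq_mul, mul_comm])
    rw [Nat.choose_eq_zero_of_lt (by simp at hj; omega), Nat.cast_zero, mul_zero]
  rw [sum_congr rfl fun i hi => congrArg _ (hexp i hi)]
  simp only [smul_sum, smul_smul, oddChooseSum, sum_smul]
  exact sum_comm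

def expSubOneDivX : ℚ⟦X⟧ := PowerSeries.mk fun m => ((m + 1)! : ℚ)⁻¹

lemma coeff_expSubOneDivX (m : ℕ) : coeff m expSubOneDivX = ((m + 1)! : ℚ)⁻¹ := coeff_mk _ _

lemma one_add_X_mul_expSubOneDivX : 1 + X * expSubOneDivX = exp ℚ := by
  ext m
  rcases m with _ | m
  · simp [expSubOneDivX]
  · simp [expSubOneDivX, coeff_succ_X_mul]

lemma coeff_exp_pow (i k : ℕ) : coeff k (exp ℚ ^ i) = (i : ℚ) ^ k / k ! := by
  rw [exp_pow_eq_rescale_exp, coeff_rescale, coeff_exp]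
  simp [div_eq_mul_inv]

lemma oddSum_div_factorial {n k : ℕ} (h : k ≤ n) :
    (oddSum n k : ℚ) / (k ! : ℚ) =
      ∑ j ∈ range (k + 1), oddChooseSum n j * coeff (k - j) (expSubOneDivX ^ j) := by
  have h := congrArg (coeff k) (sum_choose_odd_smul_one_add_pow n (X * expSubOneDivX))
  simp only [one_add_X_mul_expSubOneDivX, map_sum, map_nsmul, coeff_exp_pow, mul_pow,
    coeff_X_pow_mul'] at h
  simp only [nsmul_eq_mul] at h
  rw [oddSum]
  push_cast
  rw [sum_div]
  simp only [mul_div_assoc]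
  rw [h, ← sum_subset (range_subset_range.2 (by omega : k + 1 ≤ n + 1))]
  · exact sum_congr rfl fun j hj => by rw [if_pos (by simp at hj; omega)]
  · intro j _ hj
    rw [if_neg (by simp at hj; omega), mul_zero]

lemma coeff_zero_expSubOneDivX_pow (j : ℕ) : coeff 0 (expSubOneDivX ^ j) = 1 := by
  simp [coeff_zero_eq_constantCoeff_apply, expSubOneDivX]

lemma coeff_one_expSubOneDivX_pow (j : ℕ) : coeff 1 (expSubOneDivX ^ j) = j / 2 := by
  induction j with
  | zero => simp
  | succ j ih =>
    rw [pow_succ, coeff_mul, Nat.antidiagonal_succ]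
    simp [ih, coeff_expSubOneDivX, coeff_zero_expSubOneDivX_pow]
    ring

section
variable (p : ℕ) [Fact p.Prime]

def padicGrowthSubmonoid : Submonoid ℚ⟦X⟧ where
  carrier := {f | ∀ m, padicNorm p (coeff m f) ≤ (p : ℚ) ^ m}
  one_mem' m := by
    rcases m with _ | m <;> simp [coeff_one]
  mul_mem' {f g} hf hg m := by
    rw [coeff_mul]
    refine padicNorm.sum_le' (fun x hx => ?_) (by positivity)
    rw [padicNorm.mul, ← mem_antidiagonal.1 hx, pow_add]
    exact mul_le_mul (hf _) (hg _) (padicNorm.nonneg _) (by positivity)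

lemma padicNorm_inv_factorial_succ_le (m : ℕ) : padicNorm p ((m + 1)! : ℚ)⁻¹ ≤ (p : ℚ) ^ m := by
  have hp : (1 : ℚ) ≤ p := by exact_mod_cast (Fact.out : p.Prime).one_lt.le
  have hν := padicValNat_factorial_lt_of_ne_zero p (by omega : m + 1 ≠ 0)
  rw [padicNorm.eq_zpow_of_nonzero (by positivity), padicValRat.inv, padicValRat.of_nat, neg_neg,
    ← zpow_natCast]
  exact zpow_le_zpow_right₀ hp (by omega)

lemma expSubOneDivX_mem_padicGrowthSubmonoid : expSubOneDivX ∈ padicGrowthSubmonoid p :=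
  fun m => by rw [coeff_expSubOneDivX]; exact padicNorm_inv_factorial_succ_le p m

end

lemma padicNorm_four_pow_mul_coeff_expSubOneDivX_pow_le {m : ℕ} (hm : 2 ≤ m) (j : ℕ) :
    padicNorm 2 (4 ^ m * coeff m (expSubOneDivX ^ j)) ≤ 1 / 4 := by
  have h4 : padicNorm 2 4 = 1 / 4 := by
    rw [show (4 : ℚ) = (2 : ℕ) * (2 : ℕ) by norm_num, padicNorm.mul, padicNorm.padicNorm_p_of_prime]
    norm_num
  have hc := pow_mem (expSubOneDivX_mem_padicGrowthSubmonoid 2) j m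
  rw [padicNorm.mul, IsAbsoluteValue.abv_pow (padicNorm 2), h4]
  calc (1 / 4 : ℚ) ^ m * padicNorm 2 (coeff m (expSubOneDivX ^ j))
      ≤ (1 / 4) ^ m * 2 ^ m := by gcongr; exact_mod_cast hc
    _ = (1 / 2) ^ m := by rw [← mul_pow]; norm_num
    _ ≤ (1 / 2) ^ 2 := pow_le_pow_of_le_one (by norm_num) (by norm_num) hm
    _ = 1 / 4 := by norm_num

lemma padicNorm_sum_four_pow_mul_coeff_expSubOneDivX_pow_le (k : ℕ) (a : ℕ → ℕ) :
    padicNorm 2 (∑ j ∈ range k,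
      4 ^ (k + 1 - j) * coeff (k + 1 - j) (expSubOneDivX ^ j) * (a j : ℚ)) ≤ 1 / 4 := by
  refine padicNorm.sum_le' (fun j hj => ?_) (by norm_num)
  rw [padicNorm.mul]
  simpa using mul_le_mul (padicNorm_four_pow_mul_coeff_expSubOneDivX_pow_le
    (by simp at hj; omega) j) (padicNorm.of_nat _) (padicNorm.nonneg _) (by norm_num)

lemma four_dvd_two_mul_choose_sub {m k : ℕ} (hk : k < m) :
    (4 : ℤ) ∣ 2 * k * (m - k).choose k -
      if Even m ∧ Odd k then 2 * ((m - k - 1).choose (k - 1) : ℤ) else 0 := by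
  rcases Nat.even_or_odd k with ⟨r, rfl⟩ | ⟨r, rfl⟩
  · rw [if_neg (by simp [Nat.not_odd_iff_even.2 ⟨r, rfl⟩])]
    exact ⟨r * (m - (r + r)).choose (r + r), by push_cast; ring⟩
  obtain ⟨a, rfl⟩ : ∃ a, m = a + 2 * r + 2 := ⟨m - 2 * r - 2, by omega⟩
  have hpascal : ((a + 1) * a.choose (2 * r) : ℤ) = (a + 1).choose (2 * r + 1) * (2 * r + 1) := by
    exact_mod_cast add_one_mul_choose_eq a (2 * r)
  simp only [show a + 2 * r + 2 - (2 * r + 1) = a + 1 by omega, show a + 1 - 1 = a by omega,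
    show 2 * r + 1 - 1 = 2 * r by omega, show Even (a + 2 * r + 2) ↔ Even a by simp [parity_simps]]
  rcases Nat.even_or_odd a with ⟨s, rfl⟩ | ⟨s, rfl⟩
  · rw [if_pos ⟨⟨s, rfl⟩, r, rfl⟩]
    exact ⟨s * (s + s).choose (2 * r), by
      push_cast at hpascal ⊢; linear_combination -2 * hpascal⟩
  · rw [if_neg (by simp [Nat.not_even_iff_odd.2 ⟨s, rfl⟩])]
    exact ⟨(s + 1) * (2 * s + 1).choose (2 * r), by
      push_cast at hpascal ⊢; linear_combination -2 * hpascal⟩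

lemma oddSum_div_eq_sum {n k : ℕ} (h : k ≤ n) :
    (oddSum (n + 1) k : ℚ) / ((2 : ℚ) ^ (((n + 1 : ℕ) : ℤ) - 1 - 2 * (k : ℤ)) * (k ! : ℚ)) =
      ∑ j ∈ range (k + 1), 4 ^ (k - j) * coeff (k - j) (expSubOneDivX ^ j) * (n - j).choose j := by
  have h2 : (2 : ℚ) ^ (((n + 1 : ℕ) : ℤ) - 1 - 2 * (k : ℤ)) = 2 ^ n / 4 ^ k := by
    rw [show ((n + 1 : ℕ) : ℤ) - 1 - 2 * (k : ℤ) = (n : ℤ) - (2 * k : ℕ) by push_cast; ring,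
      zpow_sub₀ two_ne_zero, zpow_natCast, zpow_natCast, pow_mul]
    norm_num
  rw [mul_comm, ← div_div, oddSum_div_factorial (by omega), h2, div_div_eq_mul_div, sum_mul,
    sum_div]
  refine sum_congr rfl fun j hj => ?_
  have hj : j ≤ k := by simp at hj; omega
  have hsum : (4 : ℚ) ^ j * oddChooseSum (n + 1) j = 2 ^ n * (n - j).choose j := by
    exact_mod_cast four_pow_mul_oddChooseSum n j
  rw [pow_sub₀ _ (by norm_num) hj]
  field_simp
  linear_combination coeff (k - j) (expSubOneDivX ^ j) * hsum

lemma cong4_of_padicNorm_sub_le {r s : ℚ} (h : padicNorm 2 (r - s) ≤ 1 / 4) : cong4 r s := by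
  rcases eq_or_ne (r - s) 0 with h0 | h0
  · exact Or.inl (sub_eq_zero.1 h0)
  · right
    rw [padicNorm.eq_zpow_of_nonzero h0, show (1 / 4 : ℚ) = (2 : ℕ) ^ (-2 : ℤ) by norm_num] at h
    have := (zpow_le_zpow_iff_right₀ (by norm_num : (1 : ℚ) < (2 : ℕ))).1 h
    omega

lemma padicNorm_intCast_le_of_four_dvd {z : ℤ} (h : (4 : ℤ) ∣ z) : padicNorm 2 z ≤ 1 / 4 := by
  have := (padicNorm.dvd_iff_norm_le (p := 2) (n := 2)).1 (by simpa using h)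
  norm_num at this
  exact this

theorem stmt6 (n k : ℕ) (h : k < n) :
    cong4 ((oddSum n k : ℚ) / ((2 : ℚ) ^ ((n : ℤ) - 1 - 2 * (k : ℤ)) * (k.factorial : ℚ)))
      ((Nat.choose (n - 1 - k) k : ℚ) +
        if Even (n - 1) ∧ Even k ∧ 2 ≤ k then 2 * (Nat.choose (n - 1 - k) (k - 2) : ℚ)
        else 0) := by
  obtain ⟨n, rfl⟩ : ∃ m, n = m + 1 := ⟨n - 1, by omega⟩
  rw [oddSum_div_eq_sum (by omega)]
  apply cong4_of_padicNorm_sub_le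
  cases k with
  | zero => simp
  | succ k =>
    simp only [sum_range_succ, Nat.sub_self, Nat.add_sub_cancel_left, coeff_zero_expSubOneDivX_pow,
      coeff_one_expSubOneDivX_pow, Nat.add_sub_cancel, pow_zero, pow_one, one_mul, mul_one]
    rw [show ∀ a b c d : ℚ, a + b + c - (c + d) = a + (b - d) by intros; ring]
    refine padicNorm.nonarchimedean.trans
      (max_le (padicNorm_sum_four_pow_mul_coeff_expSubOneDivX_pow_le k _) ?_)
    refine (congrArg (padicNorm 2) ?_).trans_le
      (padicNorm_intCast_le_of_four_dvd (four_dvd_two_mul_choose_sub (m := n) (k := k) (by omega)))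
    have hcond : (Even n ∧ Even (k + 1) ∧ 2 ≤ k + 1) ↔ (Even n ∧ Odd k) := by
      simp only [Nat.even_add_one, Nat.not_even_iff_odd]
      exact ⟨fun h => ⟨h.1, h.2.1⟩, fun h => ⟨h.1, h.2, by have := h.2.pos; omega⟩⟩
    simp only [hcond, show n - (k + 1) = n - k - 1 by omega, show k + 1 - 2 = k - 1 by omega]
    split_ifs <;> push_cast <;> ring
end

section
/- If 2^{e+1} − 2^{t+1} ≤ m < 2^{e+1} − 2^t with 0 ≤ t < e, and j = 2^e − 2^r with 0 ≤ r < e, then the binomial coefficient C(m − j, j) is odd if and only if r = t. -/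
/-!
By Lucas's theorem, `C(n, k)` is odd iff every binary digit of `k` is also a digit of `n`, and
`j = 2^e - 2^r` has exactly the digits `r, …, e - 1`. If `r < t`, then `m - j < j`, so the
coefficient vanishes. If `r = t`, then `m - j ∈ [2^e - 2^t, 2^e)` has all digits `t, …, e - 1`.
If `r > t`, then `m - j ∈ [2^e, 2^e + 2^r)` lacks the digit `r`.
-/

theorem Finset.odd_prod_iff {ι : Type*} {s : Finset ι} {f : ι → ℕ} :
    Odd (∏ i ∈ s, f i) ↔ ∀ i ∈ s, Odd (f i) := by
  simp only [← Nat.not_even_iff_odd, even_iff_two_dvd,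
    Prime.dvd_finsetProd_iff Nat.prime_two.prime, not_exists, not_and]

namespace Nat

theorem odd_choose_iff_of_lt_two {b c : ℕ} (hb : b < 2) (hc : c < 2) :
    Odd (b.choose c) ↔ (c = 1 → b = 1) := by
  interval_cases b <;> interval_cases c <;> decide

theorem odd_choose_iff_testBit (n k : ℕ) :
    Odd (n.choose k) ↔ ∀ i, k.testBit i = true → n.testBit i = true := by
  have hn : n < 2 ^ (n + k) := lt_of_le_of_lt (by omega) Nat.lt_two_pow_self
  have hk : k < 2 ^ (n + k) := lt_of_le_of_lt (by omega) Nat.lt_two_pow_self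
  rw [odd_iff, Choose.choose_modEq_prod_range_choose_nat hn hk, ← odd_iff, Finset.odd_prod_iff]
  refine forall_congr' fun i => ?_
  by_cases hi : i < n + k
  · simp only [Finset.mem_range, hi, true_implies, testBit_eq_decide_div_mod_eq, decide_eq_true_eq]
    exact odd_choose_iff_of_lt_two (mod_lt _ two_pos) (mod_lt _ two_pos)
  · have : k.testBit i = false :=
      testBit_lt_two_pow (hk.trans_le (Nat.pow_le_pow_right two_pos (by omega)))
    simp [hi, this]

theorem testBit_two_pow_sub_two_pow {a b : ℕ} (h : b ≤ a) (i : ℕ) :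
    (2 ^ a - 2 ^ b).testBit i = (decide (b ≤ i) && decide (i < a)) := by
  have : 2 ^ a - 2 ^ b = 2 ^ b * (2 ^ (a - b) - 1) := by
    rw [Nat.mul_sub, ← pow_add, Nat.add_sub_cancel' h, mul_one]
  rw [this, testBit_two_pow_mul, testBit_two_pow_sub_one]
  by_cases hbi : b ≤ i <;> simp [hbi]; omega

theorem testBit_eq_true_of_two_pow_sub_two_pow_le {n a b i : ℕ} (hbi : b ≤ i) (hia : i < a)
    (h₁ : 2 ^ a - 2 ^ b ≤ n) (h₂ : n < 2 ^ a) : n.testBit i = true := by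
  have hib : 2 ^ b ≤ 2 ^ i := Nat.pow_le_pow_right two_pos hbi
  have hai : 2 ^ i * 2 ^ (a - i) = 2 ^ a := by rw [← pow_add, Nat.add_sub_cancel' hia.le]
  have : n = 2 ^ i * (2 ^ (a - i) - 1) + (n - (2 ^ a - 2 ^ i)) := by
    rw [Nat.mul_sub, hai]; omega
  rw [this, testBit_two_pow_mul_add _ (by omega), if_neg (lt_irrefl i), testBit_two_pow_sub_one]
  simpa using hia

theorem testBit_eq_false_of_two_pow_le {n a b : ℕ} (hba : b < a)
    (h₁ : 2 ^ a ≤ n) (h₂ : n < 2 ^ a + 2 ^ b) : n.testBit b = false := by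
  obtain ⟨s, rfl⟩ := exists_add_of_le h₁
  rw [testBit_two_pow_add_gt hba, testBit_lt_two_pow (by omega)]

end Nat

theorem stmt10 (e t r m : ℕ) (ht : t < e) (hr : r < e)
    (h1 : 2 ^ (e + 1) - 2 ^ (t + 1) ≤ m) (h2 : m < 2 ^ (e + 1) - 2 ^ t) :
    Odd (Nat.choose (m - (2 ^ e - 2 ^ r)) (2 ^ e - 2 ^ r)) ↔ r = t := by
  have he : 2 ^ (e + 1) = 2 * 2 ^ e := by ring
  have ht' : 2 ^ (t + 1) = 2 * 2 ^ t := by ring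
  have hte : 2 ^ (t + 1) ≤ 2 ^ e := Nat.pow_le_pow_right two_pos ht
  have hre : 2 ^ r ≤ 2 ^ e := Nat.pow_le_pow_right two_pos hr.le
  rcases lt_trichotomy r t with hrt | rfl | htr
  · have hrt' : 2 ^ (r + 1) ≤ 2 ^ t := Nat.pow_le_pow_right two_pos hrt
    have : m - (2 ^ e - 2 ^ r) < 2 ^ e - 2 ^ r := by rw [pow_succ] at hrt'; omega
    simp only [Nat.choose_eq_zero_of_lt this, Nat.not_odd_zero, false_iff]
    exact hrt.ne
  · refine iff_of_true ((Nat.odd_choose_iff_testBit _ _).2 fun i hi => ?_) rfl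
    simp only [Nat.testBit_two_pow_sub_two_pow hr.le, Bool.and_eq_true, decide_eq_true_eq] at hi
    exact Nat.testBit_eq_true_of_two_pow_sub_two_pow_le hi.1 hi.2 (by omega) (by omega)
  · refine iff_of_false (fun hodd => ?_) htr.ne'
    have htr' : 2 ^ (t + 1) ≤ 2 ^ r := Nat.pow_le_pow_right two_pos htr
    have hbit := (Nat.odd_choose_iff_testBit _ _).1 hodd r
      (by simp [Nat.testBit_two_pow_sub_two_pow hr.le, hr])
    rw [Nat.testBit_eq_false_of_two_pow_le hr (by omega) (by omega)] at hbit
    exact Bool.false_ne_true hbit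
end

section
/- Suppose 2^e + 2^t ≤ n < 2^e + 2^{t+1} with 0 ≤ t ≤ e−1, let S_n = {p ∈ ℕ : max(0, n − 2^e − 2^{e-1}) ≤ p < 2^{e-1} and C(n−1−p, p) is odd}, let p ∈ S_n, and let p₀ be the residue of p modulo 2^t. Then α(p − p₀) ≤ 1, and both binomial coefficients C(n − p₀ − 1, p₀) and C(n − 2^{e-1} − p₀ − 1, 2^{e-1} + p₀) are odd. -/
namespace Nat

theorem and_eq_mod_two_pow_and {x y k : ℕ} (hy : y < 2 ^ k) : x &&& y = x % 2 ^ k &&& y := by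
  rw [← Nat.mod_eq_of_lt (Nat.and_lt_two_pow x hy), Nat.and_mod_two_pow, Nat.mod_eq_of_lt hy]

theorem two_pow_add_and_of_lt {y k : ℕ} (hy : y < 2 ^ k) (x : ℕ) :
    (2 ^ k + x) &&& y = x &&& y := by
  rw [and_eq_mod_two_pow_and hy, Nat.add_mod_left, ← and_eq_mod_two_pow_and hy]

theorem add_lt_two_pow_of_and_eq_zero {x y k : ℕ} (hx : x < 2 ^ k) (hy : y < 2 ^ k)
    (hxy : x &&& y = 0) : x + y < 2 ^ k := by
  induction k generalizing x y with
  | zero => omega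
  | succ k ih =>
    have hhigh : x / 2 + y / 2 < 2 ^ k :=
      ih (by omega) (by omega) (by rw [← Nat.and_div_two, hxy])
    have hlow : ¬(x % 2 = 1 ∧ y % 2 = 1) := by rw [← Nat.and_mod_two_eq_one, hxy]; decide
    omega

theorem odd_choose_iff_odd_choose_mod_two_and_div_two (n k : ℕ) :
    Odd (n.choose k) ↔ Odd ((n % 2).choose (k % 2)) ∧ Odd ((n / 2).choose (k / 2)) := by
  rw [← Nat.odd_mul, Nat.odd_iff, Nat.odd_iff,
    Choose.choose_modEq_choose_mod_mul_choose_div_nat (p := 2)]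

theorem and_eq_zero_iff_mod_two_and_div_two (x y : ℕ) :
    x &&& y = 0 ↔ ¬(x % 2 = 1 ∧ y % 2 = 1) ∧ x / 2 &&& y / 2 = 0 := by
  rw [← Nat.and_mod_two_eq_one, ← Nat.and_div_two]
  omega

theorem odd_choose_add_iff_and_eq_zero (a b : ℕ) : Odd ((a + b).choose b) ↔ a &&& b = 0 := by
  induction b using Nat.strong_induction_on generalizing a with
  | _ b ih =>
  rcases b.eq_zero_or_pos with rfl | hb
  · simp
  rw [odd_choose_iff_odd_choose_mod_two_and_div_two, and_eq_zero_iff_mod_two_and_div_two]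
  by_cases hcarry : a % 2 = 1 ∧ b % 2 = 1
  · have : (a + b) % 2 = 0 := by omega
    simp [this, hcarry]
  · have hlow : Odd (((a + b) % 2).choose (b % 2)) := by
      rcases Nat.mod_two_eq_zero_or_one a with ha | ha <;>
        rcases Nat.mod_two_eq_zero_or_one b with hb | hb <;>
        simp_all [Nat.add_mod]
    rw [show (a + b) / 2 = a / 2 + b / 2 by omega, ih (b / 2) (by omega)]
    tauto

theorem eq_zero_of_add_add_one_eq_two_pow {x y s : ℕ} (h : x + y + 1 = 2 ^ s)
    (hxy : (2 * x + 1) &&& y = 0) : y = 0 := by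
  induction s generalizing x y with
  | zero => omega
  | succ s ih =>
    rw [pow_succ] at h
    have hy : y % 2 = 0 := by
      have := Nat.and_mod_two_eq_one (a := 2 * x + 1) (b := y)
      rw [hxy] at this
      omega
    have hhalf : x &&& y / 2 = 0 := by
      rw [← show (2 * x + 1) / 2 = x by omega, ← Nat.and_div_two, hxy]
    have : y / 2 = 0 := ih (x := x / 2) (by omega) (by rwa [show 2 * (x / 2) + 1 = x by omega])
    omega

theorem eq_zero_or_eq_two_pow_of_add_eq_two_pow {x y s : ℕ} (h : x + y = 2 ^ s)
    (hxy : x &&& y / 2 = 0) : y = 0 ∨ ∃ k, y = 2 ^ k := by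
  induction s generalizing x y with
  | zero => exact (by omega : y = 0 ∨ y = 1).imp_right fun h1 => ⟨0, h1⟩
  | succ s ih =>
    rw [pow_succ] at h
    rcases Nat.mod_two_eq_zero_or_one y with hy | hy
    · have hhalf : y / 2 = 0 ∨ ∃ k, y / 2 = 2 ^ k :=
        ih (x := x / 2) (by omega) (by rw [← Nat.and_div_two, hxy])
      rcases hhalf with h0 | ⟨k, hk⟩
      · left; omega
      · right; exact ⟨k + 1, by rw [pow_succ]; omega⟩
    · have : y / 2 = 0 := eq_zero_of_add_add_one_eq_two_pow (x := x / 2) (s := s) (by omega)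
        (by rwa [show 2 * (x / 2) + 1 = x by omega])
      right; exact ⟨0, by omega⟩

theorem mod_add_two_mul_mod_eq_of_and_eq_zero {a p t S c : ℕ} (hap : a &&& p = 0)
    (h : a + 2 * p = 2 ^ (t + 1) * S + c) (hc : 2 ^ t ≤ c + 1) (hc' : c < 2 ^ (t + 1)) :
    a % 2 ^ (t + 1) + 2 * (p % 2 ^ t) = c ∧ a / 2 ^ (t + 1) + p / 2 ^ t = S := by
  have hP : 2 ^ (t + 1) = 2 * 2 ^ t := pow_succ' ..
  have hcarry : a % 2 ^ (t + 1) + p % 2 ^ (t + 1) < 2 ^ (t + 1) :=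
    add_lt_two_pow_of_and_eq_zero (Nat.mod_lt _ (by positivity)) (Nat.mod_lt _ (by positivity))
      (by rw [← Nat.and_mod_two_pow, hap, Nat.zero_mod])
  have hp₀ : p % 2 ^ t ≤ p % 2 ^ (t + 1) := by
    rw [← Nat.mod_mod_of_dvd p (pow_dvd_pow 2 t.le_succ)]
    exact Nat.mod_le _ _
  have hsplit : 2 ^ (t + 1) * (a / 2 ^ (t + 1) + p / 2 ^ t) + (a % 2 ^ (t + 1) + 2 * (p % 2 ^ t))
      = 2 ^ (t + 1) * S + c := by
    have ha := Nat.div_add_mod a (2 ^ (t + 1))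
    have hp := Nat.div_add_mod p (2 ^ t)
    have h2p : 2 ^ (t + 1) * (p / 2 ^ t) = 2 * (2 ^ t * (p / 2 ^ t)) := by rw [hP, mul_assoc]
    linarith
  have hq : a / 2 ^ (t + 1) + p / 2 ^ t = S := by
    rcases lt_trichotomy (a / 2 ^ (t + 1) + p / 2 ^ t) S with hlt | heq | hgt
    · have := Nat.mul_le_mul_left (2 ^ (t + 1)) hlt
      rw [Nat.mul_succ] at this
      omega
    · exact heq
    · have := Nat.mul_le_mul_left (2 ^ (t + 1)) hgt
      rw [Nat.mul_succ] at this
      omega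
  refine ⟨?_, hq⟩
  rw [hq] at hsplit
  omega

end Nat

theorem alpha_two_pow_mul (k : ℕ) {m : ℕ} (hm : 0 < m) : alpha (2 ^ k * m) = alpha m := by
  simp [alpha, Nat.digits_base_pow_mul one_lt_two hm]

theorem alpha_two_pow (k : ℕ) : alpha (2 ^ k) = 1 := by
  simpa [alpha] using alpha_two_pow_mul k one_pos

theorem alpha_sub_mod_two_pow_le_one {a p t s : ℕ} (hap : a &&& p = 0)
    (hhigh : a / 2 ^ (t + 1) + p / 2 ^ t = 2 ^ s) : alpha (p - p % 2 ^ t) ≤ 1 := by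
  have hdisj : a / 2 ^ (t + 1) &&& p / 2 ^ t / 2 = 0 := by
    rw [Nat.div_div_eq_div_mul, ← pow_succ, ← Nat.and_div_two_pow, hap, Nat.zero_div]
  rw [show p - p % 2 ^ t = 2 ^ t * (p / 2 ^ t) by have := Nat.div_add_mod p (2 ^ t); omega]
  rcases Nat.eq_zero_or_eq_two_pow_of_add_eq_two_pow hhigh hdisj with h0 | ⟨k, hk⟩
  · simp [h0, alpha]
  · rw [hk, ← pow_add, alpha_two_pow]

theorem stmt11 (n e t p : ℕ)
    (ht : (t : ℤ) ≤ (e : ℤ) - 1)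
    (hn1 : 2 ^ e + 2 ^ t ≤ n) (hn2 : n < 2 ^ e + 2 ^ (t + 1))
    (hp1 : n - 2 ^ e - 2 ^ (e - 1) ≤ p) (hp2 : p < 2 ^ (e - 1))
    (hp3 : Odd (Nat.choose (n - 1 - p) p)) :
    alpha (p - p % 2 ^ t) ≤ 1 ∧
    Odd (Nat.choose (n - (p % 2 ^ t) - 1) (p % 2 ^ t)) ∧
    Odd (Nat.choose (n - 2 ^ (e - 1) - (p % 2 ^ t) - 1) (2 ^ (e - 1) + p % 2 ^ t)) := by
  obtain ⟨s, rfl⟩ : ∃ s, e = t + 1 + s := ⟨e - (t + 1), by omega⟩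
  rw [show t + 1 + s - 1 = t + s by omega] at hp1 hp2 ⊢
  have he : 2 ^ (t + 1 + s) = 2 ^ (t + 1) * 2 ^ s := pow_add ..
  have he' : 2 ^ (t + 1 + s) = 2 * 2 ^ (t + s) := by rw [add_right_comm, pow_succ']
  have hap : (n - 1 - 2 * p) &&& p = 0 := by
    rwa [← Nat.odd_choose_add_iff_and_eq_zero, show n - 1 - 2 * p + p = n - 1 - p by omega]
  obtain ⟨hlow, hhigh⟩ := Nat.mod_add_two_mul_mod_eq_of_and_eq_zero hap
    (S := 2 ^ s) (c := n - 2 ^ (t + 1 + s) - 1) (by rw [← he]; omega) (by omega) (by omega)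
  set a₀ := (n - 1 - 2 * p) % 2 ^ (t + 1)
  set p₀ := p % 2 ^ t
  have hp₀ : p₀ < 2 ^ t := Nat.mod_lt _ (by positivity)
  have hdisj : a₀ &&& p₀ = 0 := by
    rw [Nat.and_eq_mod_two_pow_and hp₀, Nat.mod_mod_of_dvd _ (pow_dvd_pow 2 t.le_succ),
      ← Nat.and_mod_two_pow, hap, Nat.zero_mod]
  refine ⟨alpha_sub_mod_two_pow_le_one hap hhigh, ?_, ?_⟩
  · have hp₀e : p₀ < 2 ^ (t + 1 + s) :=
      hp₀.trans_le (Nat.pow_le_pow_right two_pos (by omega))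
    rw [show n - p₀ - 1 = (2 ^ (t + 1 + s) + a₀) + p₀ by omega,
      Nat.odd_choose_add_iff_and_eq_zero, Nat.two_pow_add_and_of_lt hp₀e, hdisj]
  · have ha₀ : a₀ < 2 ^ (t + s) := by
      rcases s with _ | s
      · -- `t = e - 1`: here the lower bound on `p` is what keeps `a₀` below `2 ^ (e - 1)`
        have : p₀ = p := Nat.mod_eq_of_lt hp2
        omega
      · exact (Nat.mod_lt _ (by positivity)).trans_le (Nat.pow_le_pow_right two_pos (by omega))
    rw [show n - 2 ^ (t + s) - p₀ - 1 = a₀ + (2 ^ (t + s) + p₀) by omega,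
      Nat.odd_choose_add_iff_and_eq_zero, Nat.and_comm, Nat.two_pow_add_and_of_lt ha₀,
      Nat.and_comm, hdisj]
end

section
/- For every nonnegative integer m and every integer x, Σ_{j=0}^m C(j, m−j)·C(x−j, j) ≡ C(x+1, m) + 2·C(x+1, m−1) (mod 4), where C(a, b) denotes the integer-valued generalized binomial coefficient for integer a (so in particular C(j, m−j) is the ordinary binomial coefficient, zero when j < m−j), and C(x+1, m−1) = 0 when m = 0. -/
/-!
Both sides of the congruence, as functions `f m x`, satisfy
`f (m + 2) x - f (m + 2) (x - 1) = f (m + 1) (x - 2) + f m (x - 2)`: the sum by Pascal's rule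
applied to both binomials, the right-hand side because its difference in `x` lowers `m` by one.
They agree mod 4 for `m = 0, 1`, so by induction on `m` their difference at `m + 2` is constant
in `x`; it vanishes at `x = m + 2`, where the sum is `1` or `0` according to the parity of `m`
and the right-hand side is `(m + 3)²`.
-/

/-- The integer-valued generalized binomial coefficient
`C(a, b) = a(a−1)⋯(a−b+1)/b!` for `a : ℤ`, `b : ℕ`. -/
def ichoose (a : ℤ) (b : ℕ) : ℤ :=
  if 0 ≤ a then (Nat.choose a.toNat b : ℤ)
  else (-1) ^ b * (Nat.choose ((-a).toNat + b - 1) b : ℤ)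

open Finset

theorem ichoose_eq_ringChoose (a : ℤ) (b : ℕ) : ichoose a b = Ring.choose a b := by
  unfold ichoose
  split_ifs with ha
  · lift a to ℕ using ha
    rw [Int.toNat_natCast, Ring.choose_natCast]
  · obtain ⟨n, rfl⟩ : ∃ n : ℕ, a = -((n + 1 : ℕ) : ℤ) := ⟨(-a).toNat - 1, by omega⟩
    have hn : ((n + 1 : ℕ) : ℤ) + b - 1 = ((n + b : ℕ) : ℤ) := by push_cast; ring
    rw [Ring.choose_neg, hn, Ring.choose_natCast, neg_neg, Int.toNat_natCast,
      show n + 1 + b - 1 = n + b by omega, Units.smul_def, Int.coe_negOnePow_natCast, smul_eq_mul]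

theorem Finset.Nat.sum_antidiagonal_choose_succ_mul {M : Type*} [NonAssocSemiring M] (g : ℕ → M)
    (n : ℕ) :
    ∑ p ∈ antidiagonal (n + 1), ((p.1 + 1).choose p.2 : M) * g p.1 =
      ∑ p ∈ antidiagonal (n + 1), (p.1.choose p.2 : M) * g p.1 +
        ∑ p ∈ antidiagonal n, (p.1.choose p.2 : M) * g p.1 := by
  simp only [Nat.sum_antidiagonal_succ' (n := n), Nat.choose_zero_right, Nat.choose_succ_succ,
    Nat.cast_add, add_mul, sum_add_distrib]
  abel

section BinomialRing

variable {R : Type*} [CommRing R] [BinomialRing R]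

theorem Ring.choose_succ_sub_choose (r : R) (k : ℕ) :
    Ring.choose (r + 1) (k + 1) - Ring.choose r (k + 1) = Ring.choose r k := by
  rw [Ring.choose_succ_succ, add_sub_cancel_right]

/-- Indexed by `(j, m - j)` over the antidiagonal, so that no truncated subtraction occurs. -/
def diagonalChooseSum (m : ℕ) (x : R) : R :=
  ∑ p ∈ antidiagonal m, (p.1.choose p.2 : R) * Ring.choose (x - p.1) p.1

/-- The `if` is needed because `m - 1` truncates to `0` at `m = 0`. -/
def chooseAddTwoChoose (m : ℕ) (x : R) : R :=
  Ring.choose (x + 1) m + 2 * (if m = 0 then 0 else Ring.choose (x + 1) (m - 1))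

theorem diagonalChooseSum_zero (x : R) : diagonalChooseSum 0 x = 1 := by
  simp [diagonalChooseSum]

theorem diagonalChooseSum_one (x : R) : diagonalChooseSum 1 x = x - 1 := by
  simp [diagonalChooseSum, Nat.sum_antidiagonal_succ]

theorem diagonalChooseSum_recurrence (m : ℕ) (x : R) :
    diagonalChooseSum (m + 2) x - diagonalChooseSum (m + 2) (x - 1) =
      diagonalChooseSum (m + 1) (x - 2) + diagonalChooseSum m (x - 2) := by
  have pascal (i : ℕ) : Ring.choose (x - (i + 1 : ℕ)) (i + 1) -
      Ring.choose (x - 1 - (i + 1 : ℕ)) (i + 1) = Ring.choose (x - 2 - i) i := by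
    rw [← Ring.choose_succ_sub_choose (x - 2 - i) i]
    congr 2 <;> push_cast <;> ring
  unfold diagonalChooseSum
  rw [← sum_sub_distrib, Nat.sum_antidiagonal_succ]
  simp only [Nat.choose_zero_succ, Nat.cast_zero, zero_mul, sub_self, zero_add, ← mul_sub, pascal]
  exact Finset.Nat.sum_antidiagonal_choose_succ_mul (fun i ↦ Ring.choose (x - 2 - i) i) m

theorem chooseAddTwoChoose_succ_sub_sub_one (k : ℕ) (x : R) :
    chooseAddTwoChoose (k + 1) x - chooseAddTwoChoose (k + 1) (x - 1) =
      chooseAddTwoChoose k (x - 1) := by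
  have pascal (j : ℕ) : Ring.choose (x + 1) (j + 1) - Ring.choose (x - 1 + 1) (j + 1) =
      Ring.choose (x - 1 + 1) j := by
    rw [sub_add_cancel, Ring.choose_succ_sub_choose]
  rcases k with _ | k
  · simp [chooseAddTwoChoose]
  · simp only [chooseAddTwoChoose, if_neg (Nat.succ_ne_zero _), Nat.add_sub_cancel]
    linear_combination pascal (k + 1) + 2 * pascal k

theorem chooseAddTwoChoose_recurrence (m : ℕ) (x : R) :
    chooseAddTwoChoose (m + 2) x - chooseAddTwoChoose (m + 2) (x - 1) =
      chooseAddTwoChoose (m + 1) (x - 2) + chooseAddTwoChoose m (x - 2) := by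
  have h := chooseAddTwoChoose_succ_sub_sub_one m (x - 1)
  rw [sub_sub, one_add_one_eq_two] at h
  rw [chooseAddTwoChoose_succ_sub_sub_one]
  linear_combination h

theorem chooseAddTwoChoose_zero (x : R) : chooseAddTwoChoose 0 x = 1 := by
  simp [chooseAddTwoChoose]

theorem chooseAddTwoChoose_one (x : R) : chooseAddTwoChoose 1 x = x + 3 := by
  simp only [chooseAddTwoChoose, one_ne_zero, if_false, Nat.sub_self, Ring.choose_one_right,
    Ring.choose_zero_right]
  ring

theorem diagonalChooseSum_natCast_self (m : ℕ) :
    diagonalChooseSum m (m : R) = if Even m then 1 else 0 := by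
  have term (p : ℕ × ℕ) (hp : p ∈ antidiagonal m) :
      (p.1.choose p.2 : R) * Ring.choose ((m : R) - p.1) p.1 = if p.1 = p.2 then 1 else 0 := by
    rw [HasAntidiagonal.mem_antidiagonal] at hp
    rw [← hp, Nat.cast_add, add_sub_cancel_left, Ring.choose_natCast, ← Nat.cast_mul]
    split_ifs with h
    · simp [h]
    · rcases lt_or_gt_of_ne h with h | h <;> simp [Nat.choose_eq_zero_of_lt h]
  rw [diagonalChooseSum, sum_congr rfl term]
  rcases Nat.even_or_odd' m with ⟨k, rfl | rfl⟩
  · have diag (p : ℕ × ℕ) (hp : p ∈ antidiagonal (2 * k)) :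
        (if p.1 = p.2 then (1 : R) else 0) = if p = (k, k) then 1 else 0 := by
      rw [HasAntidiagonal.mem_antidiagonal] at hp
      congr 1
      simp only [Prod.ext_iff, eq_iff_iff]
      omega
    rw [sum_congr rfl diag, sum_ite_eq', if_pos (by simp; omega), if_pos (even_two_mul k)]
  · rw [if_neg (by simp), sum_eq_zero]
    intro p hp
    rw [HasAntidiagonal.mem_antidiagonal] at hp
    exact if_neg (by omega)

theorem chooseAddTwoChoose_natCast_self (m : ℕ) :
    chooseAddTwoChoose m (m : R) = ((m : R) + 1) ^ 2 := by
  rcases m with _ | m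
  · simp [chooseAddTwoChoose]
  · have two_mul_choose : 2 * (m + 2).choose m = (m + 2) * (m + 1) := by
      have := Nat.choose_succ_right_eq (m + 2) m
      rw [Nat.choose_succ_self_right, show m + 2 - m = 2 by omega] at this
      linarith
    have h : ((m + 1 : ℕ) : R) + 1 = ((m + 2 : ℕ) : R) := by push_cast; ring
    simp only [chooseAddTwoChoose, if_neg (Nat.succ_ne_zero _), Nat.add_sub_cancel, h,
      Ring.choose_natCast, Nat.choose_succ_self_right]
    have := congrArg (Nat.cast : ℕ → R) two_mul_choose
    push_cast at this ⊢
    linear_combination this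

end BinomialRing

theorem eq_of_recurrence {G : Type*} [AddCommGroup G] {f g : ℕ → ℤ → G}
    (hf : ∀ m x, f (m + 2) x - f (m + 2) (x - 1) = f (m + 1) (x - 2) + f m (x - 2))
    (hg : ∀ m x, g (m + 2) x - g (m + 2) (x - 1) = g (m + 1) (x - 2) + g m (x - 2))
    (h0 : f 0 = g 0) (h1 : f 1 = g 1) (hdiag : ∀ m : ℕ, f m m = g m m) : f = g := by
  funext m
  induction m using Nat.strong_induction_on with
  | _ m ih =>
    match m with
    | 0 => exact h0
    | 1 => exact h1
    | m + 2 =>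
      have periodic : Function.Periodic (fun x ↦ f (m + 2) x - g (m + 2) x) 1 := by
        intro x
        have hfx := hf m (x + 1)
        have hgx := hg m (x + 1)
        rw [add_sub_cancel_right, ih (m + 1) (by omega), ih m (by omega)] at hfx
        rw [← hfx] at hgx
        simpa [sub_eq_sub_iff_sub_eq_sub, eq_comm] using hgx
      funext x
      have := periodic.sub_int_mul_eq (x := x) (x - (m + 2 : ℕ))
      simp only [Int.cast_id, mul_one, sub_sub_cancel, hdiag, sub_self] at this
      exact sub_eq_zero.mp this.symm

theorem diagonalChooseSum_modEq_chooseAddTwoChoose (m : ℕ) (x : ℤ) :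
    diagonalChooseSum m x ≡ chooseAddTwoChoose m x [ZMOD 4] := by
  suffices h : (fun m (x : ℤ) ↦ ((diagonalChooseSum m x : ℤ) : ZMod 4)) =
      fun m x ↦ ((chooseAddTwoChoose m x : ℤ) : ZMod 4) from
    (ZMod.intCast_eq_intCast_iff _ _ 4).mp (congrFun (congrFun h m) x)
  have four : (4 : ZMod 4) = 0 := rfl
  apply eq_of_recurrence
  · intro m x
    rw [← Int.cast_sub, diagonalChooseSum_recurrence, Int.cast_add]
  · intro m x
    rw [← Int.cast_sub, chooseAddTwoChoose_recurrence, Int.cast_add]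
  · funext x
    simp [diagonalChooseSum_zero, chooseAddTwoChoose_zero]
  · funext x
    simp only [diagonalChooseSum_one, chooseAddTwoChoose_one]
    push_cast
    linear_combination (-1 : ZMod 4) * four
  · intro m
    simp only [diagonalChooseSum_natCast_self, chooseAddTwoChoose_natCast_self]
    rcases Nat.even_or_odd' m with ⟨k, rfl | rfl⟩
    · simp only [even_two_mul, if_true]
      push_cast
      linear_combination (-(k : ZMod 4) ^ 2 - k) * four
    · simp only [Nat.not_even_two_mul_add_one, if_false]
      push_cast
      linear_combination (-((k : ZMod 4) + 1) ^ 2) * four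

theorem stmt18 (m : ℕ) (x : ℤ) :
    (∑ j ∈ Finset.range (m + 1), (Nat.choose j (m - j) : ℤ) * ichoose (x - j) j)
      ≡ ichoose (x + 1) m + 2 * (if m = 0 then 0 else ichoose (x + 1) (m - 1)) [ZMOD 4] := by
  have lhs : ∑ j ∈ range (m + 1), (j.choose (m - j) : ℤ) * ichoose (x - j) j =
      diagonalChooseSum m x := by
    rw [diagonalChooseSum,
      Nat.sum_antidiagonal_eq_sum_range_succ (fun i j ↦ (i.choose j : ℤ) * Ring.choose (x - i) i)]
    simp only [ichoose_eq_ringChoose]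
  have rhs : ichoose (x + 1) m + 2 * (if m = 0 then 0 else ichoose (x + 1) (m - 1)) =
      chooseAddTwoChoose m x := by
    simp only [ichoose_eq_ringChoose, chooseAddTwoChoose]
  rw [lhs, rhs]
  exact diagonalChooseSum_modEq_chooseAddTwoChoose m x
end

section
/- For all integers 1 ≤ j ≤ m, the rational number 2^{m−j}·j!·b_{j,m}/m! is congruent modulo 4 in ℤ_(2) to C(j, m−j) + 2·c_{j,m}, where c_{j,m} = C(j, m−j−1) if j is even and c_{j,m} = C(j, m−j−2) if j is odd, with the convention C(a, b) = 0 when b < 0 or a < b. -/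
/-- The polynomial `(x+1)·x·(x−1)⋯(x−m+2)` (the product of `m` consecutive
factors starting from `x+1`). -/
noncomputable def descPoly (m : ℕ) : Polynomial ℤ :=
  ∏ s ∈ Finset.range m, (Polynomial.X + Polynomial.C (1 - (s : ℤ)))

/-- The coefficients `b_{j,m}` defined by the polynomial identity
`(x+1)·x·(x−1)⋯(x−m+2) = Σ_{j=1}^m b_{j,m} x^j`. -/
noncomputable def bcoef (j m : ℕ) : ℤ := (descPoly m).coeff j

/-- Value of `(x+1)·x·(x−1)⋯(x−m+2)` at an integer `x`. -/
def descVal (m : ℕ) (x : ℤ) : ℤ := ∏ s ∈ Finset.range m, (x + 1 - (s : ℤ))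

/-- Auxiliary: `qAux m k x` is `q_k(x)` for `k ≤ m`, defined recursively by
`q_1(x) = x − 1` and, for `m ≥ 2`, by the identity
`(x+1)·x⋯(x−m+2) = Σ_{j=1}^m 2^{m−j} b_{j,m} q_j(x)` (using `b_{m,m} = 1`,
i.e. `q_m(x) = (x+1)·x⋯(x−m+2) − Σ_{j=1}^{m−1} 2^{m−j} b_{j,m} q_j(x)`). -/
noncomputable def qAux : ℕ → ℕ → ℤ → ℤ
  | 0, _, _ => 0
  | m + 1, k, x =>
    if k = m + 1 then
      if m = 0 then x - 1
      else descVal (m + 1) x -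
        ∑ j ∈ Finset.Icc 1 m, 2 ^ (m + 1 - j) * bcoef j (m + 1) * qAux m j x
    else qAux m k x

/-- `qval m x = q_m(x)`, the value at `x` of the integer polynomial `q_m`. -/
noncomputable def qval (m : ℕ) (x : ℤ) : ℤ := qAux m m x

/-- `c_{j,m} = C(j, m−j−1)` if `j` is even and `C(j, m−j−2)` if `j` is odd,
with the convention that the binomial coefficient is `0` for a negative
lower index (hence the guards, since `m − j − 1` is truncated subtraction). -/
def ccoef (j m : ℕ) : ℕ :=
  if Even j then (if j + 1 ≤ m then Nat.choose j (m - j - 1) else 0)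
  else (if j + 2 ≤ m then Nat.choose j (m - j - 2) else 0)

/-!
Put `ℓ(t) = log(1 + 2t) / 2 = ∑_{k ≥ 1} (-2)^(k-1) t^k / k`. Rescaling the exponential generating
function `(1 + t)^(x+1) = (1 + t) exp(x log(1 + t))` of the polynomials `(x+1)x⋯(x-m+2)` gives
`2^(m-j) j! b_{j,m} / m! = [t^m] (1 + 2t) ℓ(t)^j`; here this is proved by matching the recurrence
`b_{j,m+1} = b_{j-1,m} + (1-m) b_{j,m}` with the one that `(1 + 2t) ℓ' = 1` imposes on the
coefficients. Since `v₂(2^(k-1)/k) ≥ 2` for `k = 3` and `k ≥ 5`, `ℓ` is a power series over `ℤ₂`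
congruent to `t - t² - 2t⁴` modulo 4. Modulo 4 one has `(1 - t - 2t³)² = (1 + t)²` and
`(1 + 2t)(1 - t - 2t³) = (1 + t)(1 + 2t²)`, so `(1 + 2t)(t - t² - 2t⁴)^j = t^j (1 + t)^j (1 + 2t^e)`
with `e = 1` for even `j` and `e = 2` for odd `j`, whose coefficient of `t^m` is
`C(j, m-j) + 2 c_{j,m}`.
-/

lemma descPoly_succ (m : ℕ) :
    descPoly (m + 1) = descPoly m * (Polynomial.X + Polynomial.C (1 - (m : ℤ))) :=
  Finset.prod_range_succ _ _

lemma bcoef_zero_right (j : ℕ) : bcoef j 0 = if j = 0 then 1 else 0 := by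
  simp [bcoef, descPoly, Polynomial.coeff_one]

lemma bcoef_zero_succ (m : ℕ) : bcoef 0 (m + 1) = (1 - m) * bcoef 0 m := by
  rw [bcoef, descPoly_succ, mul_add, Polynomial.coeff_add, Polynomial.coeff_mul_X_zero,
    Polynomial.coeff_mul_C, bcoef]
  ring

lemma bcoef_succ_succ (i m : ℕ) :
    bcoef (i + 1) (m + 1) = bcoef i m + (1 - m) * bcoef (i + 1) m := by
  rw [bcoef, descPoly_succ, mul_add, Polynomial.coeff_add, Polynomial.coeff_mul_X,
    Polynomial.coeff_mul_C, bcoef, bcoef]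
  ring

section ModFour

open Polynomial

variable {R : Type*} [CommRing R]

variable (R) in
noncomputable def halfLogModFour : R[X] := X - X ^ 2 - 2 * X ^ 4

lemma one_sub_X_sub_two_X_pow_three_sq (h4 : (4 : R) = 0) :
    (1 - X - 2 * X ^ 3 : R[X]) ^ 2 = (1 + X) ^ 2 := by
  have h4' : (4 : R[X]) = 0 := by rw [← map_ofNat C 4, h4, map_zero]
  linear_combination (-X - X ^ 3 + X ^ 4 + X ^ 6 : R[X]) * h4'

lemma one_add_two_X_mul_halfLogModFour_pow (h4 : (4 : R) = 0) (j : ℕ) :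
    (1 + 2 * X) * halfLogModFour R ^ j =
      X ^ j * ((1 + X) ^ j + 2 * X ^ (if Even j then 1 else 2) * (1 + X) ^ j) := by
  have h4' : (4 : R[X]) = 0 := by rw [← map_ofNat C 4, h4, map_zero]
  have hX : halfLogModFour R = X * (1 - X - 2 * X ^ 3) := by rw [halfLogModFour]; ring
  have hpow (i : ℕ) : (1 - X - 2 * X ^ 3 : R[X]) ^ (2 * i) = (1 + X) ^ (2 * i) := by
    rw [pow_mul, pow_mul, one_sub_X_sub_two_X_pow_three_sq h4]
  rw [hX, mul_pow]
  obtain ⟨i, rfl | rfl⟩ := Nat.even_or_odd' j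
  · rw [if_pos (even_two_mul i), hpow]
    ring
  · rw [if_neg (Nat.not_even_two_mul_add_one i), pow_succ (1 - X - 2 * X ^ 3 : R[X]) (2 * i),
      hpow]
    linear_combination (X ^ (2 * i + 1) * (1 + X) ^ (2 * i) * (-X ^ 2 - X ^ 3 - X ^ 4)) * h4'

lemma coeff_one_add_two_X_mul_halfLogModFour_pow (h4 : (4 : R) = 0) {j m : ℕ} (hjm : j ≤ m) :
    ((1 + 2 * X) * halfLogModFour R ^ j).coeff m =
      ((j.choose (m - j) + 2 * ccoef j m : ℕ) : R) := by
  rw [one_add_two_X_mul_halfLogModFour_pow h4, coeff_X_pow_mul', if_pos hjm, coeff_add, mul_assoc,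
    coeff_ofNat_mul, coeff_X_pow_mul', coeff_one_add_X_pow, coeff_one_add_X_pow, ccoef]
  split_ifs <;> first | omega | simp

end ModFour

@[simp, norm_cast]
lemma PadicInt.coe_ofNat {p : ℕ} [Fact p.Prime] (n : ℕ) [n.AtLeastTwo] :
    ((ofNat(n) : ℤ_[p]) : ℚ_[p]) = ofNat(n) := rfl

lemma norm_neg_two_pow_div_natCast_le {k n : ℕ} (hk : n + padicValNat 2 k + 1 ≤ k) :
    ‖((-2 : ℚ_[2]) ^ (k - 1) / k)‖ ≤ 2 ^ (-n : ℤ) := by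
  have hnorm2 : ‖(2 : ℚ_[2])‖ = 2⁻¹ := by simpa using Padic.norm_p (p := 2)
  have hnormk : ‖(k : ℚ_[2])‖ = 2 ^ (-(padicValNat 2 k : ℤ)) := by
    rw [Padic.norm_eq_zpow_neg_valuation (by norm_cast; omega), Padic.valuation_natCast]
    norm_num
  rw [norm_div, norm_pow, norm_neg, hnorm2, hnormk, inv_pow, ← zpow_natCast, ← zpow_neg,
    div_eq_mul_inv, ← zpow_neg, ← zpow_add₀ two_ne_zero]
  exact zpow_le_zpow_right₀ one_le_two (by omega)

lemma padicValNat_two_add_three_le {k : ℕ} (hk : k = 3 ∨ 5 ≤ k) : padicValNat 2 k + 3 ≤ k := by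
  rcases hk with rfl | hk
  · simp [padicValNat.eq_zero_of_not_dvd]
  set v := padicValNat 2 k
  have hdvd : 2 ^ v ≤ k := Nat.le_of_dvd (by omega) pow_padicValNat_dvd
  rcases le_or_gt v 2 with hv | hv
  · omega
  · have hlt := Nat.lt_two_pow_self (n := v - 2)
    have : 2 ^ v = 4 * 2 ^ (v - 2) := by
      rw [show 4 = 2 ^ 2 by rfl, ← pow_add, show 2 + (v - 2) = v by omega]
    omega

open PowerSeries

/-- The coefficients `(-2)^(k-1) / k` of `log(1 + 2X) / 2`; the division by zero makes the
constant coefficient `0`. -/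
noncomputable def halfLogCoeff (k : ℕ) : ℤ_[2] :=
  ⟨(-2 : ℚ_[2]) ^ (k - 1) / k, by
    rcases eq_or_ne k 0 with rfl | hk
    · simp
    · simpa using norm_neg_two_pow_div_natCast_le (n := 0)
        (by have := Nat.padicValNat_lt_self (p := 2) hk; omega)⟩

lemma coe_halfLogCoeff (k : ℕ) : (halfLogCoeff k : ℚ_[2]) = (-2) ^ (k - 1) / k := rfl

lemma halfLogCoeff_zero : halfLogCoeff 0 = 0 := PadicInt.ext (by simp [coe_halfLogCoeff])

lemma halfLogCoeff_one : halfLogCoeff 1 = 1 := PadicInt.ext (by simp [coe_halfLogCoeff])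

lemma halfLogCoeff_two : halfLogCoeff 2 = -1 := PadicInt.ext (by norm_num [coe_halfLogCoeff])

lemma halfLogCoeff_four : halfLogCoeff 4 = -2 := PadicInt.ext (by norm_num [coe_halfLogCoeff])

lemma halfLogCoeff_succ_mul (k : ℕ) : halfLogCoeff (k + 1) * (k + 1) = (-2) ^ k := by
  apply PadicInt.ext
  push_cast [coe_halfLogCoeff]
  field_simp

lemma toZModPow_halfLogCoeff {k : ℕ} (hk : k = 3 ∨ 5 ≤ k) :
    PadicInt.toZModPow 2 (halfLogCoeff k) = 0 := by
  rw [← RingHom.mem_ker, PadicInt.ker_toZModPow, ← PadicInt.norm_le_pow_iff_mem_span_pow]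
  exact norm_neg_two_pow_div_natCast_le (by have := padicValNat_two_add_three_le hk; omega)

noncomputable def halfLog : ℤ_[2]⟦X⟧ := mk halfLogCoeff

lemma coeff_derivative_halfLog (n : ℕ) : coeff n (d⁄dX ℤ_[2] halfLog) = (-2) ^ n := by
  rw [coeff_derivative, halfLog, coeff_mk, ← halfLogCoeff_succ_mul]

lemma one_add_two_X_mul_derivative_halfLog : (1 + 2 * X) * d⁄dX ℤ_[2] halfLog = 1 := by
  ext n
  rw [add_mul, one_mul, mul_assoc, map_add, ← map_ofNat C 2, coeff_C_mul]
  rcases n with _ | n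
  · simp [coeff_derivative_halfLog]
  · rw [coeff_succ_X_mul, coeff_derivative_halfLog, coeff_derivative_halfLog, coeff_one,
      if_neg n.succ_ne_zero]
    ring

lemma map_toZModPow_halfLog :
    map (PadicInt.toZModPow 2) halfLog = (halfLogModFour (ZMod (2 ^ 2)) : (ZMod (2 ^ 2))⟦X⟧) := by
  ext k
  rw [coeff_map, halfLog, coeff_mk, Polynomial.coeff_coe, halfLogModFour]
  rcases (by omega : k = 0 ∨ k = 1 ∨ k = 2 ∨ k = 4 ∨ k = 3 ∨ 5 ≤ k) with
    rfl | rfl | rfl | rfl | hk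
  · simp [halfLogCoeff_zero]
  · simp [halfLogCoeff_one, Polynomial.coeff_X, Polynomial.coeff_X_pow]
  · simp [halfLogCoeff_two, Polynomial.coeff_X, Polynomial.coeff_X_pow]
  · simp [halfLogCoeff_four, Polynomial.coeff_X, Polynomial.coeff_X_pow, map_ofNat]
  · rw [toZModPow_halfLogCoeff hk]
    simp [Polynomial.coeff_X, Polynomial.coeff_X_pow, show 1 ≠ k by omega, show k ≠ 2 by omega,
      show k ≠ 4 by omega]

noncomputable def bcoefSeries (j : ℕ) : ℤ_[2]⟦X⟧ := (1 + 2 * X) * halfLog ^ j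

lemma coeff_one_add_two_X_mul_derivative {R : Type*} [CommRing R] (f : R⟦X⟧) (m : ℕ) :
    coeff m ((1 + 2 * X) * d⁄dX R f) = (m + 1) * coeff (m + 1) f + 2 * m * coeff m f := by
  rw [add_mul, one_mul, mul_assoc, map_add, ← map_ofNat C 2, coeff_C_mul, coeff_derivative]
  rcases m with _ | m
  · simp
  · rw [coeff_succ_X_mul, coeff_derivative]
    push_cast
    ring

lemma one_add_two_X_mul_derivative_bcoefSeries (j : ℕ) :
    (1 + 2 * X) * d⁄dX ℤ_[2] (bcoefSeries j) = 2 • bcoefSeries j + j • bcoefSeries (j - 1) := by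
  have hX : d⁄dX ℤ_[2] (1 + 2 * X : ℤ_[2]⟦X⟧) = 2 := by
    rw [map_add, derivative_one, ← map_ofNat C 2, Derivation.leibniz]
    simp
  rw [bcoefSeries, bcoefSeries, Derivation.leibniz, derivative_pow, hX, smul_eq_mul, smul_eq_mul,
    nsmul_eq_mul, nsmul_eq_mul]
  push_cast
  linear_combination (j * halfLog ^ (j - 1) * (1 + 2 * X)) * one_add_two_X_mul_derivative_halfLog

lemma coeff_zero_bcoefSeries (j : ℕ) : coeff 0 (bcoefSeries j) = if j = 0 then 1 else 0 := by
  have h : constantCoeff halfLog = 0 := by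
    simp [halfLog, ← coeff_zero_eq_constantCoeff_apply, halfLogCoeff_zero]
  rcases j with _ | j <;> simp [bcoefSeries, coeff_zero_eq_constantCoeff_apply, h]

lemma two_pow_mul_factorial_mul_coeff_bcoefSeries (j m : ℕ) :
    2 ^ j * m.factorial * coeff m (bcoefSeries j) = 2 ^ m * j.factorial * (bcoef j m : ℤ_[2]) := by
  induction m generalizing j with
  | zero =>
    rw [coeff_zero_bcoefSeries, bcoef_zero_right]
    split_ifs <;> simp_all
  | succ m ih =>
    have hrec := congrArg (coeff m) (one_add_two_X_mul_derivative_bcoefSeries j)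
    rw [coeff_one_add_two_X_mul_derivative, map_add, map_nsmul, map_nsmul, nsmul_eq_mul,
      nsmul_eq_mul] at hrec
    rw [Nat.factorial_succ]
    rcases j with _ | i
    · rw [bcoef_zero_succ]
      push_cast at hrec ⊢
      linear_combination (m.factorial : ℤ_[2]) * hrec + 2 * (1 - (m : ℤ_[2])) * ih 0
    · rw [bcoef_succ_succ, Nat.factorial_succ i]
      have ih₁ := ih (i + 1)
      rw [Nat.factorial_succ] at ih₁
      have ih₀ := ih i
      push_cast at hrec ih₀ ih₁ ⊢
      linear_combination (2 ^ (i + 1) * m.factorial : ℤ_[2]) * hrec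
        + (2 - 2 * (m : ℤ_[2])) * ih₁ + 2 * ((i : ℤ_[2]) + 1) * ih₀

lemma coe_coeff_bcoefSeries {j m : ℕ} (hjm : j ≤ m) :
    ((coeff m (bcoefSeries j) : ℤ_[2]) : ℚ_[2]) =
      (((2 : ℚ) ^ (m - j) * j.factorial * bcoef j m / m.factorial : ℚ) : ℚ_[2]) := by
  have h := congrArg ((↑) : ℤ_[2] → ℚ_[2]) (two_pow_mul_factorial_mul_coeff_bcoefSeries j m)
  obtain ⟨d, rfl⟩ := Nat.exists_eq_add_of_le hjm
  rw [Nat.add_sub_cancel_left]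
  push_cast at h ⊢
  rw [eq_div_iff (Nat.cast_ne_zero.mpr (Nat.factorial_ne_zero _))]
  apply mul_left_cancel₀ (pow_ne_zero j (two_ne_zero : (2 : ℚ_[2]) ≠ 0))
  linear_combination h

lemma map_toZModPow_bcoefSeries (j : ℕ) :
    map (PadicInt.toZModPow 2) (bcoefSeries j) =
      (((1 + 2 * Polynomial.X) * halfLogModFour (ZMod (2 ^ 2)) ^ j : Polynomial (ZMod (2 ^ 2))) :
        (ZMod (2 ^ 2))⟦X⟧) := by
  have h2 : ((2 : Polynomial (ZMod (2 ^ 2))) : (ZMod (2 ^ 2))⟦X⟧) = 2 :=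
    map_ofNat Polynomial.coeToPowerSeries.ringHom 2
  rw [bcoefSeries, map_mul, map_pow, map_toZModPow_halfLog, map_add, map_one, map_mul, map_ofNat,
    map_X]
  push_cast
  rw [h2]

lemma cong4_of_toZModPow_eq {r s : ℚ} {x y : ℤ_[2]} (hx : (x : ℚ_[2]) = r) (hy : (y : ℚ_[2]) = s)
    (h : PadicInt.toZModPow 2 x = PadicInt.toZModPow 2 y) : cong4 r s := by
  have hmem : x - y ∈ Ideal.span {((2 : ℕ) : ℤ_[2]) ^ 2} := by
    rw [← PadicInt.ker_toZModPow, RingHom.mem_ker, map_sub, h, sub_self]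
  have hcoe : ((x - y : ℤ_[2]) : ℚ_[2]) = ((r - s : ℚ) : ℚ_[2]) := by
    push_cast [hx, hy]
    rfl
  by_cases hxy : x - y = 0
  · left
    rwa [hxy, PadicInt.coe_zero, eq_comm, Rat.cast_eq_zero, sub_eq_zero] at hcoe
  · right
    rw [← Padic.valuation_ratCast, ← hcoe, PadicInt.valuation_coe]
    exact_mod_cast (PadicInt.mem_span_pow_iff_le_valuation _ hxy 2).1 hmem

theorem stmt19_general (j m : ℕ) (h2 : j ≤ m) :
    cong4 (((2 : ℚ) ^ (m - j) * (j.factorial : ℚ) * (bcoef j m : ℚ)) / (m.factorial : ℚ))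
      ((Nat.choose j (m - j) : ℚ) + 2 * (ccoef j m : ℚ)) := by
  refine cong4_of_toZModPow_eq (coe_coeff_bcoefSeries h2)
    (y := ((j.choose (m - j) + 2 * ccoef j m : ℕ) : ℤ_[2])) (by push_cast; rfl) ?_
  rw [← coeff_map, map_toZModPow_bcoefSeries, Polynomial.coeff_coe,
    coeff_one_add_two_X_mul_halfLogModFour_pow (by decide) h2, map_natCast]

theorem stmt19 (j m : ℕ) (h1 : 1 ≤ j) (h2 : j ≤ m) :
    cong4 (((2 : ℚ) ^ (m - j) * (j.factorial : ℚ) * (bcoef j m : ℚ)) / (m.factorial : ℚ))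
      ((Nat.choose j (m - j) : ℚ) + 2 * (ccoef j m : ℚ)) :=
  stmt19_general j m h2
end
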